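/- For every integer t ≥ 3, the identity w₂^{2^{t−2}−2}·g_{2^t−5} = w₃^{2^{t−1}−3} + Σ_{i=1}^{t−3} w₂^{2^{t−2}−2^{i+1}}·w₃^{2^i−2}·g_{2^t+2^i−3} holds in R, where the sum is understood to be zero when t = 3. -/
import Mathlib


open MvPolynomial Finset

noncomputable section

/-- `R2 = (ℤ/2)[w₂, w₃]`, the polynomial ring in two variables over `ℤ/2ℤ`. -/
abbrev R2 : Type := MvPolynomial (Fin 2) (ZMod 2)

/-- The variable `w₂`. -/
def w2 : R2 := X 0

/-- The variable `w₃`. -/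
def w3 : R2 := X 1

/-- The polynomials `g_r`: `g₀ = 1`, `g₁ = 0`, `g₂ = w₂`,
`g_{r+3} = w₂ g_{r+1} + w₃ g_r`. -/
def g : ℕ → R2
  | 0 => 1
  | 1 => 0
  | 2 => w2
  | (r+3) => w2 * g (r+1) + w3 * g r

lemma g_rec (r : ℕ) : g (r+3) = w2 * g (r+1) + w3 * g r := rfl

lemma h2R : (2 : R2) = 0 := by exact_mod_cast CharP.cast_eq_zero R2 2

lemma g0 : g 0 = 1 := rfl
lemma g1 : g 1 = 0 := rfl
lemma g2 : g 2 = w2 := rfl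
lemma g3 : g 3 = w3 := by
  have h := g_rec 0; norm_num at h; rw [h, g1, g0]; ring
lemma g4 : g 4 = w2 ^ 2 := by
  have h := g_rec 1; norm_num at h; rw [h, g2, g1]; ring
lemma g5 : g 5 = 0 := by
  have h := g_rec 2; norm_num at h; rw [h, g3, g2]
  linear_combination (w2 * w3) * h2R
lemma g6 : g 6 = w2 ^ 3 + w3 ^ 2 := by
  have h := g_rec 3; norm_num at h; rw [h, g4, g3]; ring
lemma g7 : g 7 = w2 ^ 2 * w3 := by
  have h := g_rec 4; norm_num at h; rw [h, g5, g4]; ring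

lemma g_pair : ∀ k, g (2*k+3) = w3 * g k ^ 2 ∧ g (2*k+2) = g (k+1) ^ 2 + w2 * g k ^ 2 := by
  intro k
  induction k using Nat.strong_induction_on with
  | _ k ih =>
    match k with
    | 0 => exact ⟨by rw [g3, g0]; ring, by rw [g2, g1, g0]; ring⟩
    | 1 => exact ⟨by rw [g5, g1]; ring, by rw [g4, g2, g1]; ring⟩
    | 2 => exact ⟨by rw [g7, g2]; ring, by rw [g6, g3, g2]; ring⟩
    | (k+3) =>
      obtain ⟨o1, e1⟩ := ih (k+2) (by omega)
      obtain ⟨o2, _⟩ := ih (k+1) (by omega)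
      rw [show k+2+1 = k+3 by omega] at e1
      have H1 := g_rec (2*k+6)
      rw [show 2*k+6+3 = 2*(k+3)+3 by omega, show 2*k+6+1 = 2*(k+2)+3 by omega,
        show 2*k+6 = 2*(k+2)+2 by omega] at H1
      have H2 := g_rec (2*k+5)
      rw [show 2*k+5+3 = 2*(k+3)+2 by omega, show 2*k+5+1 = 2*(k+2)+2 by omega,
        show 2*k+5 = 2*(k+1)+3 by omega] at H2
      have H3 := g_rec (k+1)
      rw [show k+1+3 = k+4 by omega, show k+1+1 = k+2 by omega] at H3
      constructor
      · linear_combination H1 + w2 * o1 + w3 * e1 + (w2 * w3 * g (k+2) ^ 2) * h2R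
      · rw [show k+3+1 = k+4 by omega]
        linear_combination H2 + w2 * e1 + w3 * o2 +
          (g (k+4) + w2 * g (k+2) + w3 * g (k+1)) * H3 +
          (w2 ^ 2 * g (k+2) ^ 2 + w3 ^ 2 * g (k+1) ^ 2 - g (k+4) ^ 2 + w2 * w3 * g (k+2) * g (k+1)) * h2R

lemma g_odd (k : ℕ) : g (2*k+3) = w3 * g k ^ 2 := (g_pair k).1

/-- Lemma 4.1: for `t ≥ 3`,
`w₂^{2^{t-2}-2} g_{2^t-5} = w₃^{2^{t-1}-3} + Σ_{i=1}^{t-3} w₂^{2^{t-2}-2^{i+1}} w₃^{2^i-2} g_{2^t+2^i-3}`. -/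
theorem lemma_4_1 (t : ℕ) (ht : 3 ≤ t) :
    w2 ^ (2 ^ (t - 2) - 2) * g (2 ^ t - 5) =
      w3 ^ (2 ^ (t - 1) - 3) +
        ∑ i ∈ Finset.Icc 1 (t - 3),
          w2 ^ (2 ^ (t - 2) - 2 ^ (i + 1)) * w3 ^ (2 ^ i - 2) * g (2 ^ t + 2 ^ i - 3) := by
  induction t, ht using Nat.le_induction with
  | base =>
    rw [show Finset.Icc 1 (3-3) = ∅ by decide]
    norm_num [g3]
  | succ t ht IH =>
    have ha2 : 2 ≤ 2 ^ (t-2) := by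
      calc (2:ℕ) = 2 ^ 1 := rfl
        _ ≤ 2 ^ (t-2) := Nat.pow_le_pow_right (by norm_num) (by omega)
    have e1 : 2 ^ (t-1) = 2 * 2 ^ (t-2) := by
      rw [show t-1 = (t-2)+1 by omega]; ring
    have e2 : 2 ^ t = 4 * 2 ^ (t-2) := by
      conv_lhs => rw [show t = (t-2)+2 by omega]
      ring
    have e3 : 2 ^ (t+1) = 8 * 2 ^ (t-2) := by
      rw [show t+1 = (t-2)+3 by omega]; ring
    rw [show t+1-2 = t-1 by omega, show t+1-1 = t by omega, show t+1-3 = t-2 by omega,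
      e1, e2, e3]
    rw [e1, e2] at IH
    set a := 2 ^ (t-2) with ha
    -- IH with an extra factor of w3
    have hIH' : w2 ^ (a-2) * (w3 * g (4*a-5)) =
        w3 ^ (2*a-2) + ∑ i ∈ Finset.Icc 1 (t-3),
          w2 ^ (a - 2 ^ (i+1)) * w3 ^ (2 ^ i - 1) * g (4*a + 2 ^ i - 3) := by
      calc w2 ^ (a-2) * (w3 * g (4*a-5)) = w3 * (w2 ^ (a-2) * g (4*a-5)) := by ring
        _ = w3 * (w3 ^ (2*a-3) + ∑ i ∈ Finset.Icc 1 (t-3),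
              w2 ^ (a - 2 ^ (i+1)) * w3 ^ (2 ^ i - 2) * g (4*a + 2 ^ i - 3)) := by rw [IH]
        _ = _ := by
            rw [mul_add, Finset.mul_sum]
            congr 1
            · rw [show 2*a-2 = (2*a-3)+1 by omega, pow_succ]; ring
            · refine Finset.sum_congr rfl fun i hi => ?_
              simp only [Finset.mem_Icc] at hi
              have h1 : 2 ≤ 2 ^ i := by
                calc (2:ℕ) = 2 ^ 1 := rfl
                  _ ≤ 2 ^ i := Nat.pow_le_pow_right (by norm_num) hi.1
              rw [show 2 ^ i - 1 = (2 ^ i - 2)+1 by omega, pow_succ]; ring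
    have hg42 : g (4*a-2) = w2 * g (4*a-4) + w3 * g (4*a-5) := by
      have h := g_rec (4*a-5)
      rw [show 4*a-5+3 = 4*a-2 by omega, show 4*a-5+1 = 4*a-4 by omega] at h
      exact h
    -- the "F" identity
    have hF : w2 ^ (a-1) * g (4*a-4) =
        w3 ^ (2*a-2) + ∑ j ∈ Finset.Icc 0 (t-3),
          w2 ^ (a - 2 ^ (j+1)) * w3 ^ (2 ^ j - 1) * g (4*a + 2 ^ j - 3) := by
      rw [show Finset.Icc 0 (t-3) = insert 0 (Finset.Icc 1 (t-3)) by
          ext x; simp [Finset.mem_Icc, Finset.mem_insert]; omega,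
        Finset.sum_insert (by simp)]
      simp only [pow_zero, pow_one, zero_add, Nat.sub_self, mul_one]
      rw [show 4*a+1-3 = 4*a-2 by omega, hg42, show a-1 = (a-2)+1 by omega, pow_succ]
      linear_combination hIH' - (w2 ^ (a-2) * w3 * g (4*a-5)) * h2R
    -- rewrite the two sides of the goal
    have hL : w2 ^ (2*a-2) * g (8*a-5) = w3 * (w2 ^ (a-1) * g (4*a-4)) ^ 2 := by
      rw [show 8*a-5 = 2*(4*a-4)+3 by omega, g_odd, mul_pow, ← pow_mul,
        show (a-1)*2 = 2*a-2 by omega]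
      ring
    have hR : w3 ^ (4*a-3) + ∑ i ∈ Finset.Icc 1 (t-2),
          w2 ^ (2*a - 2 ^ (i+1)) * w3 ^ (2 ^ i - 2) * g (8*a + 2 ^ i - 3) =
        w3 * (w3 ^ (2*a-2) + ∑ j ∈ Finset.Icc 0 (t-3),
          w2 ^ (a - 2 ^ (j+1)) * w3 ^ (2 ^ j - 1) * g (4*a + 2 ^ j - 3)) ^ 2 := by
      rw [CharTwo.add_sq, CharTwo.sum_sq (R := R2), mul_add, Finset.mul_sum]
      congr 1
      · rw [← pow_mul, show (2*a-2)*2 = 4*a-4 by omega, show 4*a-3 = (4*a-4)+1 by omega,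
          pow_succ]
        ring
      · rw [show Finset.Icc 1 (t-2) = Finset.map (addRightEmbedding 1) (Finset.Icc 0 (t-3)) by
            rw [Finset.map_add_right_Icc]; congr 1; omega,
          Finset.sum_map]
        refine Finset.sum_congr rfl fun j hj => ?_
        simp only [Finset.mem_Icc, addRightEmbedding_apply] at hj ⊢
        have hj2 : 2 ^ (j+1) ≤ a := by
          rw [ha]; exact Nat.pow_le_pow_right (by norm_num) (by omega)
        have hp1 : (1:ℕ) ≤ 2 ^ j := Nat.one_le_two_pow
        have hps : 2 ^ (j+1) = 2 * 2 ^ j := by ring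
        have hps2 : 2 ^ (j+1+1) = 2 * 2 ^ (j+1) := by ring
        rw [show 8*a + 2 ^ (j+1) - 3 = 2*(4*a + 2 ^ j - 3)+3 by omega, g_odd,
          mul_pow, mul_pow, ← pow_mul, ← pow_mul,
          show (a - 2 ^ (j+1))*2 = 2*a - 2 ^ (j+1+1) by omega,
          show (2 ^ j - 1)*2 = 2 ^ (j+1) - 2 by omega]
        ring
    rw [hL, hF]
    exact hR.symm

end
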